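/- In the three-party scenario where clone 2 and the ancilla are measured in the computational basis, the conditional (unnormalized) state of clone 1 after outcomes (clone2, ancilla) = (0,1) is √(2/3) α|0⟩ + (1/√6) β|1⟩, and after (1,0) it is −(1/√6) α|0⟩ − √(2/3) β|1⟩. Applying the filter with successful Kraus operator A_F = (1/2)|0⟩⟨0| + |1⟩⟨1| in the first case (respectively A_F = −|0⟩⟨0| − (1/2)|1⟩⟨1| in the second) yields, upon success, the state |φ⟩ = α|0⟩+β|1⟩ exactly; the total success probability, summed over both outcome branches, is 1/3, independent of α, β. -/

import Mathlib

open scoped ComplexConjugate ComplexOrder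
open Finset Matrix

noncomputable section

/-- Index set for three qubits: (clone 1, clone 2, ancilla). -/
abbrev I3 := Fin 2 × Fin 2 × Fin 2

/-- Image of |0⟩|00⟩ under the universal 1→2 cloner:
    √(2/3)|00⟩|1⟩ − (1/√6)(|01⟩+|10⟩)|0⟩. -/
def out0 : I3 → ℂ := fun p =>
  if p = (0, 0, 1) then ((Real.sqrt (2/3) : ℝ) : ℂ)
  else if p = (0, 1, 0) then -(((1 / Real.sqrt 6 : ℝ)) : ℂ)
  else if p = (1, 0, 0) then -(((1 / Real.sqrt 6 : ℝ)) : ℂ)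
  else 0

/-- Image of |1⟩|00⟩ under the universal 1→2 cloner:
    −√(2/3)|11⟩|0⟩ + (1/√6)(|10⟩+|01⟩)|1⟩. -/
def out1 : I3 → ℂ := fun p =>
  if p = (1, 1, 0) then -((Real.sqrt (2/3) : ℝ) : ℂ)
  else if p = (1, 0, 1) then (((1 / Real.sqrt 6 : ℝ)) : ℂ)
  else if p = (0, 1, 1) then (((1 / Real.sqrt 6 : ℝ)) : ℂ)
  else 0

/-- Output of the cloner on input α|0⟩+β|1⟩. -/
def cloneOut (α β : ℂ) : I3 → ℂ := fun p => α * out0 p + β * out1 p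

/-- Output density matrix U(|φ⟩⟨φ| ⊗ |00⟩⟨00|)U†. -/
def rhoOut (α β : ℂ) : Matrix I3 I3 ℂ :=
  Matrix.of fun p q => cloneOut α β p * conj (cloneOut α β q)

/-- Reduced state of the first clone. -/
def rhoC (α β : ℂ) : Matrix (Fin 2) (Fin 2) ℂ :=
  Matrix.of fun i j => ∑ b : Fin 2, ∑ c : Fin 2, rhoOut α β (i, b, c) (j, b, c)

/-- Reduced state of the ancilla. -/
def rhoA (α β : ℂ) : Matrix (Fin 2) (Fin 2) ℂ :=
  Matrix.of fun i j => ∑ a : Fin 2, ∑ b : Fin 2, rhoOut α β (a, b, i) (a, b, j)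

/-- Reduced state of the two clones. -/
def rhoCC (α β : ℂ) : Matrix (Fin 2 × Fin 2) (Fin 2 × Fin 2) ℂ :=
  Matrix.of fun p q => ∑ c : Fin 2, rhoOut α β (p.1, p.2, c) (q.1, q.2, c)

def σx : Matrix (Fin 2) (Fin 2) ℂ := !![0, 1; 1, 0]
def σy : Matrix (Fin 2) (Fin 2) ℂ := !![0, -Complex.I; Complex.I, 0]
def σz : Matrix (Fin 2) (Fin 2) ℂ := !![1, 0; 0, -1]

/-- s·σ for a real 3-vector s. -/
def pauliDot (s : Fin 3 → ℝ) : Matrix (Fin 2) (Fin 2) ℂ :=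
  ((s 0 : ℝ) : ℂ) • σx + ((s 1 : ℝ) : ℂ) • σy + ((s 2 : ℝ) : ℂ) • σz

/-- (1/2)(I + s·σ), the state with Bloch vector s. -/
def blochMat (s : Fin 3 → ℝ) : Matrix (Fin 2) (Fin 2) ℂ :=
  (1/2 : ℂ) • (1 + pauliDot s)

def φvec (α β : ℂ) : Fin 2 → ℂ := ![α, β]

/-- Outer product |v⟩⟨v| on a qubit. -/
def outer (v : Fin 2 → ℂ) : Matrix (Fin 2) (Fin 2) ℂ :=
  Matrix.of fun i j => v i * conj (v j)

/-- The images U(|i⟩|00⟩) of the two input basis states. -/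
def Uout : Fin 2 → I3 → ℂ := ![out0, out1]

/-- Effective operator on the input qubit corresponding to an operator F on the output:
    E i j = ⟨U(|i⟩|00⟩)| F |U(|j⟩|00⟩)⟩ = (⟨00|_{ba} U† F U |00⟩_{ba}) i j. -/
def effOf (F : Matrix I3 I3 ℂ) : Matrix (Fin 2) (Fin 2) ℂ :=
  Matrix.of fun i j => ∑ p : I3, ∑ q : I3, conj (Uout i p) * F p q * Uout j q

/-- F ⊗ I ⊗ I: a measurement on the first clone only. -/
def extC (F : Matrix (Fin 2) (Fin 2) ℂ) : Matrix I3 I3 ℂ :=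
  Matrix.of fun p q => F p.1 q.1 * (if p.2 = q.2 then 1 else 0)

/-- I ⊗ I ⊗ F: a measurement on the ancilla only. -/
def extA (F : Matrix (Fin 2) (Fin 2) ℂ) : Matrix I3 I3 ℂ :=
  Matrix.of fun p q => (if (p.1, p.2.1) = (q.1, q.2.1) then 1 else 0) * F p.2.2 q.2.2

/-- F ⊗ I_ancilla: a measurement on the two clones. -/
def extCC (F : Matrix (Fin 2 × Fin 2) (Fin 2 × Fin 2) ℂ) : Matrix I3 I3 ℂ :=
  Matrix.of fun p q => F (p.1, p.2.1) (q.1, q.2.1) * (if p.2.2 = q.2.2 then 1 else 0)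

/-- Bell basis on two qubits, in the order φ⁺, ψ⁺, φ⁻, ψ⁻. -/
def bell : Fin 4 → (Fin 2 × Fin 2) → ℂ :=
  ![fun p => if p = (0,0) then ((1 / Real.sqrt 2 : ℝ) : ℂ)
             else if p = (1,1) then ((1 / Real.sqrt 2 : ℝ) : ℂ) else 0,
    fun p => if p = (0,1) then ((1 / Real.sqrt 2 : ℝ) : ℂ)
             else if p = (1,0) then ((1 / Real.sqrt 2 : ℝ) : ℂ) else 0,
    fun p => if p = (0,0) then ((1 / Real.sqrt 2 : ℝ) : ℂ)
             else if p = (1,1) then -((1 / Real.sqrt 2 : ℝ) : ℂ) else 0,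
    fun p => if p = (0,1) then ((1 / Real.sqrt 2 : ℝ) : ℂ)
             else if p = (1,0) then -((1 / Real.sqrt 2 : ℝ) : ℂ) else 0]

/-- Kronecker product of two single-qubit matrices. -/
def kron2 (A B : Matrix (Fin 2) (Fin 2) ℂ) : Matrix (Fin 2 × Fin 2) (Fin 2 × Fin 2) ℂ :=
  Matrix.of fun p q => A p.1 q.1 * B p.2 q.2

/-- Projector onto the symmetric subspace of two qubits: I − |ψ⁻⟩⟨ψ⁻|. -/
def symProj : Matrix (Fin 2 × Fin 2) (Fin 2 × Fin 2) ℂ :=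
  1 - Matrix.of fun p q => bell 3 p * conj (bell 3 q)

/-- Projector onto the antisymmetric subspace: |ψ⁻⟩⟨ψ⁻|. -/
def antiProj : Matrix (Fin 2 × Fin 2) (Fin 2 × Fin 2) ℂ :=
  Matrix.of fun p q => bell 3 p * conj (bell 3 q)

/-- Computational basis vector |abc⟩ of three qubits. -/
def e3 (a b c : Fin 2) : I3 → ℂ := fun p => if p = (a, b, c) then 1 else 0

/-- ∑ₚ conj(v p) w p, the inner product on three qubits. -/
def inner3 (v w : I3 → ℂ) : ℂ := ∑ p : I3, conj (v p) * w p

/-- Unnormalized conditional state of clone 1 after computational outcomes (b,c) on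
clone 2 and the ancilla. -/
def condC1 (α β : ℂ) (b c : Fin 2) : Fin 2 → ℂ := fun i => cloneOut α β (i, b, c)

/-! Since √(2/3) = 2/√6, each filter rescales the corresponding conditional state of clone 1 to
(1/√6)|φ⟩, so each of the two branches succeeds with probability ‖φ‖²/6 = 1/6. -/

open Complex

theorem Real.sqrt_two_thirds : √(2 / 3 : ℝ) = 2 * (1 / √6) := by
  rw [show (2 / 3 : ℝ) = 2 ^ 2 / 6 by norm_num, Real.sqrt_div' _ (by norm_num : (0 : ℝ) ≤ 6),
    Real.sqrt_sq (by norm_num), mul_one_div]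

theorem normSq_ofReal_one_div_sqrt_six : normSq ((1 / √6 : ℝ) : ℂ) = 1 / 6 := by
  rw [normSq_ofReal, div_mul_div_comm, one_mul, Real.mul_self_sqrt (by norm_num)]

theorem Matrix.diag_fin_two_mulVec {α : Type*} [NonUnitalNonAssocSemiring α] (a d x y : α) :
    !![a, 0; 0, d] *ᵥ ![x, y] = ![a * x, d * y] := by
  ext i
  fin_cases i <;> simp [mulVec]

theorem sum_normSq_smul {ι : Type*} [Fintype ι] (c : ℂ) (v : ι → ℂ) :
    ∑ i, normSq ((c • v) i) = normSq c * ∑ i, normSq (v i) := by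
  simp only [Pi.smul_apply, smul_eq_mul, normSq_mul, Finset.mul_sum]

theorem condC1_zero_one (α β : ℂ) :
    condC1 α β 0 1 = ![((√(2 / 3) : ℝ) : ℂ) * α, ((1 / √6 : ℝ) : ℂ) * β] := by
  ext i
  fin_cases i <;> simp [condC1, cloneOut, out0, out1, Prod.ext_iff, mul_comm]

theorem condC1_one_zero (α β : ℂ) :
    condC1 α β 1 0 = ![-((1 / √6 : ℝ) : ℂ) * α, -((√(2 / 3) : ℝ) : ℂ) * β] := by
  ext i
  fin_cases i <;> simp [condC1, cloneOut, out0, out1, Prod.ext_iff, mul_comm]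

theorem filter_condC1_zero_one (α β : ℂ) :
    !![(1 / 2 : ℂ), 0; 0, 1] *ᵥ condC1 α β 0 1 = ((1 / √6 : ℝ) : ℂ) • φvec α β := by
  rw [condC1_zero_one, diag_fin_two_mulVec, Real.sqrt_two_thirds, φvec, smul_cons, smul_cons,
    Matrix.smul_empty, smul_eq_mul, smul_eq_mul]
  push_cast
  ring_nf

theorem filter_condC1_one_zero (α β : ℂ) :
    !![(-1 : ℂ), 0; 0, -(1 / 2)] *ᵥ condC1 α β 1 0 = ((1 / √6 : ℝ) : ℂ) • φvec α β := by
  rw [condC1_one_zero, diag_fin_two_mulVec, Real.sqrt_two_thirds, φvec, smul_cons, smul_cons,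
    Matrix.smul_empty, smul_eq_mul, smul_eq_mul]
  push_cast
  ring_nf

/-- after outcomes (0,1) resp. (1,0) on (clone 2, ancilla) the conditional
clone-1 states are √(2/3)α|0⟩+(1/√6)β|1⟩ and −(1/√6)α|0⟩−√(2/3)β|1⟩; the filters
A_F = (1/2)|0⟩⟨0|+|1⟩⟨1| resp. A_F = −|0⟩⟨0|−(1/2)|1⟩⟨1| upon success yield |φ⟩ exactly,
with total success probability 1/3, independent of α, β. -/
theorem probabilistic_restoration_clone (α β : ℂ)
    (hnorm : Complex.normSq α + Complex.normSq β = 1) :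
    condC1 α β 0 1 = ![((Real.sqrt (2/3) : ℝ) : ℂ) * α, ((1 / Real.sqrt 6 : ℝ) : ℂ) * β] ∧
    condC1 α β 1 0 = ![-(((1 / Real.sqrt 6 : ℝ) : ℂ)) * α, -(((Real.sqrt (2/3) : ℝ) : ℂ)) * β] ∧
    (!![(1/2 : ℂ), 0; 0, 1]).mulVec (condC1 α β 0 1) =
      ((1 / Real.sqrt 6 : ℝ) : ℂ) • φvec α β ∧
    (!![(-1 : ℂ), 0; 0, -(1/2)]).mulVec (condC1 α β 1 0) =
      ((1 / Real.sqrt 6 : ℝ) : ℂ) • φvec α β ∧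
    (∑ i : Fin 2, Complex.normSq ((!![(1/2 : ℂ), 0; 0, 1]).mulVec (condC1 α β 0 1) i)) +
      (∑ i : Fin 2, Complex.normSq ((!![(-1 : ℂ), 0; 0, -(1/2)]).mulVec (condC1 α β 1 0) i))
      = 1/3 := by
  refine ⟨condC1_zero_one α β, condC1_one_zero α β, filter_condC1_zero_one α β,
    filter_condC1_one_zero α β, ?_⟩
  rw [filter_condC1_zero_one, filter_condC1_one_zero, sum_normSq_smul,
    normSq_ofReal_one_div_sqrt_six, φvec, Fin.sum_univ_two]
  simp only [cons_val_zero, cons_val_one, hnorm]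
  norm_num
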